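/- arXiv:math/0304019 — 2 statements merged into one kernel-verified Lean document; each statement's English description precedes it below -/
import Mathlib

section
/- 𝔵_{≤,≤} = 𝔵_{≤,<} = 𝔟, i.e., the excluded-middle cardinals for ⟨≤,≤⟩ and ⟨≤,<⟩ both equal the unbounding number. -/
open Cardinal Set

/-- `A` is almost contained in `B`: `A \ B` is finite. -/
def ASub (A B : Set ℕ) : Prop := (A \ B).Finite

/-- A family is linearly quasiordered by `⊆*`. -/
def LinQO (F : Set (Set ℕ)) : Prop := ∀ A ∈ F, ∀ B ∈ F, ASub A B ∨ ASub B A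

/-- A centered family of infinite subsets of `ℕ`. -/
def Centered (F : Set (Set ℕ)) : Prop :=
  (∀ A ∈ F, A.Infinite) ∧
  ∀ G : Finset (Set ℕ), ↑G ⊆ F → G.Nonempty → (⋂ A ∈ G, A).Infinite

/-- `A` is a pseudo-intersection of `F`. -/
def PseudoInt (F : Set (Set ℕ)) (A : Set ℕ) : Prop :=
  A.Infinite ∧ ∀ B ∈ F, ASub A B

/-- The pseudo-intersection number 𝔭. -/
noncomputable def pNum : Cardinal :=
  sInf {c | ∃ F : Set (Set ℕ), Centered F ∧ (¬∃ A, PseudoInt F A) ∧ c = #F}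

/-- The tower number 𝔱. -/
noncomputable def tNum : Cardinal :=
  sInf {c | ∃ F : Set (Set ℕ), (∀ A ∈ F, A.Infinite) ∧ LinQO F ∧
    (¬∃ A, PseudoInt F A) ∧ c = #F}

/-- Eventual dominance `f ≤* g`. -/
def LeStar (f g : ℕ → ℕ) : Prop := {n | g n < f n}.Finite

def UnboundedFam (B : Set (ℕ → ℕ)) : Prop := ¬∃ g, ∀ f ∈ B, LeStar f g

def DominatingFam (D : Set (ℕ → ℕ)) : Prop := ∀ f, ∃ g ∈ D, LeStar f g

/-- The unbounding number 𝔟. -/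
noncomputable def bNum : Cardinal := sInf {c | ∃ B, UnboundedFam B ∧ c = #B}

/-- The dominating number 𝔡. -/
noncomputable def dNum : Cardinal := sInf {c | ∃ D, DominatingFam D ∧ c = #D}

def SplittingFam (S : Set (Set ℕ)) : Prop :=
  ∀ A : Set ℕ, A.Infinite → ∃ s ∈ S, (A ∩ s).Infinite ∧ (A \ s).Infinite

/-- The splitting number 𝔰. -/
noncomputable def sNum : Cardinal := sInf {c | ∃ S, SplittingFam S ∧ c = #S}

/-- `g` avoids middles in `X` with respect to `⟨R,S⟩`. -/
def AvoidsMiddles (R S : ℕ → ℕ → Prop) (g : ℕ → ℕ) (X : Set (ℕ → ℕ)) : Prop :=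
  (∀ f ∈ X, {n | R (f n) (g n)}.Infinite) ∧
  ∀ f ∈ X, ∀ h ∈ X,
    {n | R (f n) (g n) ∧ S (g n) (h n)}.Finite ∨
    {n | R (h n) (g n) ∧ S (g n) (f n)}.Finite

/-- The excluded middle property with respect to `⟨R,S⟩`. -/
def EMP (R S : ℕ → ℕ → Prop) (X : Set (ℕ → ℕ)) : Prop := ∃ g, AvoidsMiddles R S g X

/-- The cardinal 𝔵_{R,S}. -/
noncomputable def xNum (R S : ℕ → ℕ → Prop) : Cardinal :=
  sInf {c | ∃ X : Set (ℕ → ℕ), ¬ EMP R S X ∧ c = #X}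

/-- The class 𝔅 of bounded sets. -/
def ClB (Y : Set (ℕ → ℕ)) : Prop := ∃ g, ∀ f ∈ Y, LeStar f g

/-- The class 𝔛. -/
def ClX (Y : Set (ℕ → ℕ)) : Prop := EMP (· < ·) (· ≤ ·) Y

/-- `Y` is finitely dominating: `maxfin Y` is dominating. -/
def FinDominating (Y : Set (ℕ → ℕ)) : Prop :=
  ∀ f : ℕ → ℕ, ∃ F : Finset (ℕ → ℕ), ↑F ⊆ Y ∧ LeStar f (fun n => F.sup (fun h => h n))

/-- The class 𝔇fin of non finitely-dominating sets. -/
def ClDfin (Y : Set (ℕ → ℕ)) : Prop := ¬ FinDominating Y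

/-- The class 𝔇 of non-dominating sets. -/
def ClD (Y : Set (ℕ → ℕ)) : Prop := ¬ DominatingFam Y

/-- The additivity number add(I, J). -/
noncomputable def addNum (I J : Set (ℕ → ℕ) → Prop) : Cardinal :=
  sInf {c | ∃ Fam : Set (Set (ℕ → ℕ)), (∀ Y ∈ Fam, I Y) ∧ ¬ J (⋃₀ Fam) ∧ c = #Fam}

/-- The Boolean subalgebra of `P(ℕ)` generated by `F`. -/
def genBA (F : Set (Set ℕ)) : Set (Set ℕ) :=
  ⋂₀ {C | F ⊆ C ∧ Set.univ ∈ C ∧ (∀ A ∈ C, Aᶜ ∈ C) ∧ ∀ A ∈ C, ∀ B ∈ C, A ∩ B ∈ C}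

/-- A nonprincipal ultrafilter (every member is infinite). -/
def NonPrincipal (U : Ultrafilter ℕ) : Prop := ∀ S ∈ U, Set.Infinite S

/-- The cofinality of the reduced product `ℕ^ℕ/U`. -/
noncomputable def cofRP (U : Ultrafilter ℕ) : Cardinal :=
  sInf {c | ∃ C : Set (ℕ → ℕ), (∀ f : ℕ → ℕ, ∃ g ∈ C, {n | f n ≤ g n} ∈ U) ∧ c = #C}


section Aux

/-- running maximum of `f` up to `n`. -/
def Mf (f : ℕ → ℕ) (n : ℕ) : ℕ := (Finset.range (n + 1)).sup f

lemma le_Mf (f : ℕ → ℕ) {k n : ℕ} (h : k ≤ n) : f k ≤ Mf f n :=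
  Finset.le_sup (Finset.mem_range.2 (Nat.lt_succ_of_le h))

/-- even part -/
def Ffun (f : ℕ → ℕ) (n : ℕ) : ℕ := if n % 2 = 0 then Mf f n else 0

/-- odd part -/
def Hfun (f : ℕ → ℕ) (n : ℕ) : ℕ := if n % 2 = 1 then Mf f n else 0

lemma bounded_of_finite {B : Set (ℕ → ℕ)} (hB : B.Finite) : ∃ g, ∀ f ∈ B, LeStar f g := by
  refine ⟨fun n => hB.toFinset.sup fun f => f n, fun f hf => ?_⟩
  have h : {n | (fun n => hB.toFinset.sup fun f => f n) n < f n} = ∅ := by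
    ext n
    simp only [Set.mem_setOf_eq, Set.mem_empty_iff_false, iff_false, not_lt]
    exact Finset.le_sup (f := fun f => f n) (hB.mem_toFinset.2 hf)
  rw [show LeStar f (fun n => hB.toFinset.sup fun f => f n) =
    {n | (fun n => hB.toFinset.sup fun f => f n) n < f n}.Finite from rfl, h]
  exact Set.finite_empty

lemma infinite_of_unbounded {B : Set (ℕ → ℕ)} (hB : UnboundedFam B) : B.Infinite :=
  fun hfin => hB (bounded_of_finite hfin)

lemma emp_of_bounded {S : ℕ → ℕ → Prop} (hS' : ∀ a b : ℕ, S a b → a ≤ b)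
    {X : Set (ℕ → ℕ)} (hbdd : ∃ g, ∀ f ∈ X, LeStar f g) : EMP (· ≤ ·) S X := by
  obtain ⟨g, hg⟩ := hbdd
  refine ⟨fun n => g n + 1, fun f hf => ?_, fun f hf h hh => ?_⟩
  · have h1 : {n | ¬ f n ≤ g n + 1}.Finite := by
      refine (hg f hf).subset fun n hn => ?_
      simp only [Set.mem_setOf_eq, not_le] at hn ⊢
      omega
    have h2 := h1.infinite_compl
    have h3 : {n | ¬ f n ≤ g n + 1}ᶜ = {n | f n ≤ g n + 1} := by
      ext n; simp
    rwa [h3] at h2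
  · left
    refine (hg h hh).subset fun n hn => ?_
    obtain ⟨-, hsn⟩ := hn
    exact Nat.lt_of_succ_le (hS' _ _ hsn)

lemma exists_inf_parity {B : Set (ℕ → ℕ)} (hB : UnboundedFam B) (g : ℕ → ℕ)
    (c : ℕ) (hc : c ≤ 1) : ∃ f ∈ B, {n | n % 2 = c ∧ g n < Mf f n}.Infinite := by
  by_contra hcon
  push_neg at hcon
  refine hB ⟨fun k => g (2 * k + c), fun f hf => ?_⟩
  have hfin : {n | n % 2 = c ∧ g n < Mf f n}.Finite :=
    hcon f hf
  have hsub : {k | g (2 * k + c) < f k} ⊆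
      (fun k => 2 * k + c) ⁻¹' {n | n % 2 = c ∧ g n < Mf f n} := by
    intro k hk
    refine ⟨show (2 * k + c) % 2 = c by omega, ?_⟩
    show g (2 * k + c) < Mf f (2 * k + c)
    exact lt_of_lt_of_le hk (le_Mf f (by omega))
  exact ((hfin.preimage (fun a _ b _ hab => by have h : 2 * a + c = 2 * b + c := hab; omega)).subset hsub)

lemma not_emp_X {S : ℕ → ℕ → Prop} (hS : ∀ a b : ℕ, a < b → S a b)
    {B : Set (ℕ → ℕ)} (hB : UnboundedFam B) :
    ¬ EMP (· ≤ ·) S (Ffun '' B ∪ Hfun '' B) := by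
  rintro ⟨g, -, h2⟩
  obtain ⟨f0, hf0, hinf0⟩ := exists_inf_parity hB g 0 (by norm_num)
  obtain ⟨f1, hf1, hinf1⟩ := exists_inf_parity hB g 1 (by norm_num)
  have hm0 : Ffun f0 ∈ Ffun '' B ∪ Hfun '' B := Or.inl ⟨f0, hf0, rfl⟩
  have hm1 : Hfun f1 ∈ Ffun '' B ∪ Hfun '' B := Or.inr ⟨f1, hf1, rfl⟩
  rcases h2 (Ffun f0) hm0 (Hfun f1) hm1 with h | h
  · refine (hinf1.mono ?_) h
    intro n hn
    obtain ⟨hn1, hn2⟩ := hn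
    constructor
    · simp only [Ffun, show ¬ (n % 2 = 0) by omega, if_false]
      exact Nat.zero_le _
    · simpa only [Hfun, hn1, if_true] using hS _ _ hn2
  · refine (hinf0.mono ?_) h
    intro n hn
    obtain ⟨hn1, hn2⟩ := hn
    constructor
    · simp only [Hfun, show ¬ (n % 2 = 1) by omega, if_false]
      exact Nat.zero_le _
    · simpa only [Ffun, hn1, if_true] using hS _ _ hn2

lemma x_eq_b {S : ℕ → ℕ → Prop} (hS : ∀ a b : ℕ, a < b → S a b)
    (hS' : ∀ a b : ℕ, S a b → a ≤ b) : xNum (· ≤ ·) S = bNum := by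
  have hbne : {c | ∃ B, UnboundedFam B ∧ c = #B}.Nonempty := by
    refine ⟨#(Set.univ : Set (ℕ → ℕ)), Set.univ, ?_, rfl⟩
    rintro ⟨g, hg⟩
    have h1 := hg (fun n => g n + 1) (Set.mem_univ _)
    have h2 : {n : ℕ | g n < (fun n => g n + 1) n} = Set.univ := by
      ext n; simp
    rw [show LeStar (fun n => g n + 1) g =
      {n : ℕ | g n < (fun n => g n + 1) n}.Finite from rfl, h2] at h1
    exact Set.infinite_univ h1
  obtain ⟨B, hBu, hBc⟩ : ∃ B, UnboundedFam B ∧ bNum = #B := csInf_mem hbne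
  have hnE := not_emp_X hS hBu
  have hBinf : (ℵ₀ : Cardinal) ≤ #B := Cardinal.aleph0_le_mk_iff.mpr (Set.infinite_coe_iff.mpr (infinite_of_unbounded hBu))
  have hXle : #(Ffun '' B ∪ Hfun '' B : Set (ℕ → ℕ)) ≤ #B := by
    calc #(Ffun '' B ∪ Hfun '' B : Set (ℕ → ℕ))
        ≤ #(Ffun '' B : Set (ℕ → ℕ)) + #(Hfun '' B : Set (ℕ → ℕ)) :=
          Cardinal.mk_union_le _ _
      _ ≤ #B + #B := add_le_add Cardinal.mk_image_le Cardinal.mk_image_le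
      _ = #B := Cardinal.add_eq_self hBinf
  apply le_antisymm
  · exact le_trans (csInf_le' ⟨_, hnE, rfl⟩) (hXle.trans hBc.ge)
  · refine le_csInf ⟨_, _, hnE, rfl⟩ ?_
    rintro c ⟨Y, hY, rfl⟩
    refine csInf_le' ⟨Y, fun hbdd => hY (emp_of_bounded hS' hbdd), rfl⟩

end Aux

theorem stmt6 : xNum (· ≤ ·) (· ≤ ·) = bNum ∧ xNum (· ≤ ·) (· < ·) = bNum :=
  ⟨x_eq_b (fun _ _ h => h.le) (fun _ _ h => h),
   x_eq_b (fun _ _ h => h) (fun _ _ h => h.le)⟩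
end

section
/- For every cardinal κ: κ < add(𝔇fin, 𝔇) if and only if for every κ-sequence ⟨(g_α, U_α) : α < κ⟩ with each U_α a nonprincipal ultrafilter on ℕ and each g_α ∈ ℕ^ℕ, there exists g ∈ ℕ^ℕ such that for each α, {n : g_α(n) ≤ g(n)} ∈ U_α. -/
open Cardinal Set

/-!
An ultrafilter witness `(U, g)` for each member of a family `ℱ ⊆ 𝔇fin` turns "`⋃ ℱ` is not
dominating" into "some `g'` lies `U`-above every `g`": a function not dominated by `⋃ ℱ` is such a
`g'`, and conversely if `g'` is `U`-above every `g` then `g' + 1` is not dominated by `⋃ ℱ`.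
The witnesses exist because, when the finite maxima of `Y` fail to dominate some `h`, the sets
`{n | max F n < h n}` are infinite and downward directed, hence extend to a nonprincipal
ultrafilter.
-/

open Filter

theorem leStar_refl (f : ℕ → ℕ) : LeStar f f := by
  simp [LeStar]

theorem nonPrincipal_of_le_cofinite {U : Ultrafilter ℕ} (hU : (U : Filter ℕ) ≤ cofinite) :
    NonPrincipal U := fun _ hS hfin =>
  Ultrafilter.compl_mem_iff_notMem.1 (hU hfin.compl_mem_cofinite) hS

theorem NonPrincipal.not_leStar_succ {U : Ultrafilter ℕ} (hU : NonPrincipal U) {f g : ℕ → ℕ}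
    (h : {n | f n ≤ g n} ∈ U) : ¬ LeStar (fun n => g n + 1) f := fun hfin =>
  hU _ h (hfin.subset fun _ hn => Nat.lt_succ_of_le hn)

theorem exists_nonPrincipal_forall_mem {ι : Type*} [Nonempty ι] (A : ι → Set ℕ)
    (hdir : Directed (· ⊇ ·) A) (hinf : ∀ i, (A i).Infinite) :
    ∃ U : Ultrafilter ℕ, NonPrincipal U ∧ ∀ i, A i ∈ U := by
  let l : Filter ℕ := ⨅ i, cofinite ⊓ 𝓟 (A i)
  have hd : Directed (· ≥ ·) fun i => cofinite ⊓ 𝓟 (A i) := fun i j =>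
    let ⟨k, hik, hjk⟩ := hdir i j
    ⟨k, inf_le_inf_left _ (principal_mono.2 hik), inf_le_inf_left _ (principal_mono.2 hjk)⟩
  have : l.NeBot :=
    iInf_neBot_of_directed' hd fun i => cofinite_inf_principal_neBot_iff.2 (hinf i)
  have hl : ∀ i, l ≤ cofinite ⊓ 𝓟 (A i) := iInf_le _
  refine ⟨Ultrafilter.of l, nonPrincipal_of_le_cofinite ?_, fun i => ?_⟩
  · exact (Ultrafilter.of_le l).trans ((hl (Classical.arbitrary ι)).trans inf_le_left)
  · exact Ultrafilter.of_le l ((hl i).trans inf_le_right (mem_principal_self _))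

theorem exists_ultrafilter_of_clDfin {Y : Set (ℕ → ℕ)} (hY : ClDfin Y) :
    ∃ (U : Ultrafilter ℕ) (g : ℕ → ℕ), NonPrincipal U ∧ ∀ f ∈ Y, {n | f n ≤ g n} ∈ U := by
  classical
  simp only [ClDfin, FinDominating, not_forall, not_exists, not_and] at hY
  obtain ⟨g, hg⟩ := hY
  let A : {F : Finset (ℕ → ℕ) // ↑F ⊆ Y} → Set ℕ := fun F => {n | F.1.sup (· n) < g n}
  have hdir : Directed (· ⊇ ·) A := fun F G =>
    ⟨⟨F.1 ∪ G.1, by simp [F.2, G.2]⟩,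
      fun n (hn : (F.1 ∪ G.1).sup (· n) < g n) =>
        (Finset.sup_mono Finset.subset_union_left).trans_lt hn,
      fun n (hn : (F.1 ∪ G.1).sup (· n) < g n) =>
        (Finset.sup_mono Finset.subset_union_right).trans_lt hn⟩
  have : Nonempty {F : Finset (ℕ → ℕ) // ↑F ⊆ Y} := ⟨⟨∅, by simp⟩⟩
  obtain ⟨U, hU, hA⟩ := exists_nonPrincipal_forall_mem A hdir fun F => hg F.1 F.2
  refine ⟨U, g, hU, fun f hf => mem_of_superset (hA ⟨{f}, by simpa using hf⟩) fun n hn => ?_⟩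
  simp only [A, Finset.sup_singleton, mem_ofPred_eq] at hn ⊢
  exact hn.le

theorem clDfin_of_ultrafilter {Y : Set (ℕ → ℕ)} {U : Ultrafilter ℕ} (hU : NonPrincipal U)
    {g : ℕ → ℕ} (hY : ∀ f ∈ Y, {n | f n ≤ g n} ∈ U) : ClDfin Y := by
  intro hdom
  obtain ⟨F, hFY, hF⟩ := hdom fun n => g n + 1
  refine hU.not_leStar_succ (mem_of_superset ((biInter_finset_mem F).2 fun f hf => hY f (hFY hf))
    fun n hn => ?_) hF
  simp only [mem_iInter, mem_ofPred_eq] at hn ⊢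
  exact Finset.sup_le hn

theorem lt_addNum_iff {I J : Set (ℕ → ℕ) → Prop} {κ : Cardinal} :
    κ < addNum I J ↔ (∃ ℱ : Set (Set (ℕ → ℕ)), (∀ Y ∈ ℱ, I Y) ∧ ¬ J (⋃₀ ℱ)) ∧
      ∀ ℱ : Set (Set (ℕ → ℕ)), (∀ Y ∈ ℱ, I Y) → #ℱ ≤ κ → J (⋃₀ ℱ) := by
  let S := {c | ∃ ℱ : Set (Set (ℕ → ℕ)), (∀ Y ∈ ℱ, I Y) ∧ ¬ J (⋃₀ ℱ) ∧ c = #ℱ}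
  change κ < sInf S ↔ _
  constructor
  · intro h
    obtain ⟨_, ℱ, hI, hJ, rfl⟩ : S.Nonempty := nonempty_iff_ne_empty.2 fun hS => by
      rw [hS, Cardinal.sInf_empty] at h
      exact not_lt_zero h
    refine ⟨⟨ℱ, hI, hJ⟩, fun ℱ' hI' hle => by_contra fun hJ' => ?_⟩
    exact (h.trans_le (csInf_le' ⟨ℱ', hI', hJ', rfl⟩)).not_ge hle
  · rintro ⟨⟨ℱ, hI, hJ⟩, h⟩
    obtain ⟨ℱ', hI', hJ', hmin⟩ := csInf_mem (⟨_, ℱ, hI, hJ, rfl⟩ : S.Nonempty)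
    rw [hmin]
    exact lt_of_not_ge fun hle => hJ' (h ℱ' hI' hle)

theorem exists_clDfin_family_not_clD :
    ∃ ℱ : Set (Set (ℕ → ℕ)), (∀ Y ∈ ℱ, ClDfin Y) ∧ ¬ ClD (⋃₀ ℱ) := by
  refine ⟨range fun f => {f}, forall_mem_range.2 fun f => ?_, fun hD => hD fun f => ?_⟩
  · exact clDfin_of_ultrafilter (nonPrincipal_of_le_cofinite hyperfilter_le_cofinite)
      (g := f) fun h (hh : h = f) => univ_mem' fun n => by simp [hh]
  · exact ⟨f, mem_sUnion.2 ⟨{f}, mem_range_self f, rfl⟩, leStar_refl f⟩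

theorem exists_bound_of_clD {ι : Type*} {g : ι → ℕ → ℕ} {U : ι → Ultrafilter ℕ}
    (hD : ClD (⋃ i, {f | {n | f n ≤ g i n} ∈ U i})) :
    ∃ g' : ℕ → ℕ, ∀ i, {n | g i n ≤ g' n} ∈ U i := by
  simp only [ClD, DominatingFam, not_forall, not_exists, not_and] at hD
  obtain ⟨g', hg'⟩ := hD
  refine ⟨g', fun i => ?_⟩
  have hout : {n | g' n ≤ g i n} ∉ U i := fun h => hg' g' (mem_iUnion.2 ⟨i, h⟩) (leStar_refl g')
  refine mem_of_superset (Ultrafilter.compl_mem_iff_notMem.2 hout) fun n hn => ?_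
  simp only [mem_compl_iff, mem_ofPred_eq, not_le] at hn ⊢
  exact hn.le

theorem clD_iUnion_of_bound {ι : Type*} (Y : ι → Set (ℕ → ℕ)) {g : ι → ℕ → ℕ}
    {U : ι → Ultrafilter ℕ} (hU : ∀ i, NonPrincipal (U i))
    (hY : ∀ i, ∀ f ∈ Y i, {n | f n ≤ g i n} ∈ U i) (g' : ℕ → ℕ)
    (hg' : ∀ i, {n | g i n ≤ g' n} ∈ U i) : ClD (⋃ i, Y i) := by
  intro hdom
  obtain ⟨q, hq, hle⟩ := hdom fun n => g' n + 1
  obtain ⟨i, hqi⟩ := mem_iUnion.1 hq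
  exact (hU i).not_leStar_succ
    (mem_of_superset (inter_mem (hY i q hqi) (hg' i)) fun _ ⟨h₁, h₂⟩ => Nat.le_trans h₁ h₂) hle

theorem stmt13 (κ : Cardinal) :
    κ < addNum ClDfin ClD ↔
    ∀ (ι : Type) (_ : #ι = κ) (g : ι → ℕ → ℕ) (U : ι → Ultrafilter ℕ),
      (∀ i, NonPrincipal (U i)) →
      ∃ g' : ℕ → ℕ, ∀ i, {n | g i n ≤ g' n} ∈ U i := by
  rw [lt_addNum_iff, and_iff_right exists_clDfin_family_not_clD]
  constructor
  · intro h ι hι g U hU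
    apply exists_bound_of_clD
    rw [← sUnion_range]
    exact h _ (forall_mem_range.2 fun i => clDfin_of_ultrafilter (hU i) fun _ hf => hf)
      (mk_range_le.trans hι.le)
  · intro H ℱ hℱ hle hdom
    obtain ⟨-, ⟨Y₀, hY₀, -⟩, -⟩ := hdom 0
    choose U g hU hg using fun Y : ℱ => exists_ultrafilter_of_clDfin (hℱ Y Y.2)
    obtain ⟨φ, hφ⟩ := Function.exists_surjective_iff.2
      ⟨⟨fun _ => ⟨Y₀, hY₀⟩⟩, (le_def _ _).1 (hle.trans_eq (mk_out κ).symm)⟩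
    obtain ⟨g', hg'⟩ := H κ.out (mk_out κ) (g ∘ φ) (U ∘ φ) fun i => hU (φ i)
    rw [sUnion_eq_iUnion] at hdom
    refine clD_iUnion_of_bound _ hU hg g' (fun Y => ?_) hdom
    obtain ⟨i, rfl⟩ := hφ Y
    exact hg' i
end
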